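/- arXiv:2412.16157 — 2 statements merged into one kernel-verified Lean document; each statement's English description precedes it below -/
import Mathlib

section
/- Let n ≥ 1 be an integer, λ > 0, μ > 0, set ρ = λ/μ, let α ≥ 0 and r₄ ≥ 0 be real numbers, and let y₂ ∈ ℕ. Define g : [0,∞) → ℝ by g(t) = (1 + α e^{nμt})^{y₂} · e^{−ρ α e^{nμt}}. Then g is differentiable on [0,∞) and for every t ≥ 0, g′(t) + n α e^{nμt} e^{−ρα e^{nμt}} · [ λ·(1 + α e^{nμt})^{y₂} − (μ + r₄)·y₂·(1 + α e^{nμt})^{y₂−1} ] = − n α e^{nμt} · r₄ · y₂ · (1 + α e^{nμt})^{y₂−1} · e^{−ρα e^{nμt}} ≤ 0, where y₂ − 1 denotes truncated subtraction in ℕ (the terms carrying the factor y₂ vanish when y₂ = 0). -/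
/-!
Differentiating, `g′ = n μ α e^{nμt} e^{−ρα e^{nμt}} (y₂ (1 + α e^{nμt})^{y₂−1} − ρ (1 + α e^{nμt})^{y₂})`.
Since `ρ μ = λ`, adding the generator term cancels the birth part against the `ρ`-term and the
`μ`-part of the death rate against the `y₂`-term, leaving only the `r₄`-part, which is `≤ 0`.
-/

open Real

theorem hasDerivAt_one_add_mul_pow_mul_exp_neg {E : ℝ → ℝ} {E' t : ℝ} (hE : HasDerivAt E E' t)
    (α c : ℝ) (k : ℕ) :
    HasDerivAt (fun s => (1 + α * E s) ^ k * exp (-(c * α * E s)))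
      (α * E' * exp (-(c * α * E t)) * (k * (1 + α * E t) ^ (k - 1) - c * (1 + α * E t) ^ k)) t := by
  have hbase : HasDerivAt (fun s => 1 + α * E s) (α * E') t := (hE.const_mul α).const_add 1
  refine ((hbase.pow k).mul (hE.const_mul (c * α)).neg.exp).congr_deriv ?_
  simp only [Pi.neg_apply, Pi.pow_apply]
  ring

theorem hasDerivAt_exp_const_mul (κ t : ℝ) :
    HasDerivAt (fun s => exp (κ * s)) (exp (κ * t) * κ) t := by
  simpa using ((hasDerivAt_id t).const_mul κ).exp

theorem superharmonic_hitting_time_computation_general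
    (n : ℕ) (lam mu α r₄ : ℝ)
    (hmu : 0 < mu) (hα : 0 ≤ α) (hr₄ : 0 ≤ r₄) (y₂ : ℕ) :
    ∀ t : ℝ, 0 ≤ t →
      DifferentiableAt ℝ
        (fun s : ℝ =>
          (1 + α * Real.exp ((n : ℝ) * mu * s)) ^ y₂ *
            Real.exp (-(lam / mu * α * Real.exp ((n : ℝ) * mu * s)))) t ∧
      deriv
          (fun s : ℝ =>
            (1 + α * Real.exp ((n : ℝ) * mu * s)) ^ y₂ *
              Real.exp (-(lam / mu * α * Real.exp ((n : ℝ) * mu * s)))) t +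
        (n : ℝ) * α * Real.exp ((n : ℝ) * mu * t) *
          Real.exp (-(lam / mu * α * Real.exp ((n : ℝ) * mu * t))) *
          (lam * (1 + α * Real.exp ((n : ℝ) * mu * t)) ^ y₂ -
            (mu + r₄) * (y₂ : ℝ) * (1 + α * Real.exp ((n : ℝ) * mu * t)) ^ (y₂ - 1)) =
        -((n : ℝ) * α * Real.exp ((n : ℝ) * mu * t) * r₄ * (y₂ : ℝ) *
            (1 + α * Real.exp ((n : ℝ) * mu * t)) ^ (y₂ - 1) *
            Real.exp (-(lam / mu * α * Real.exp ((n : ℝ) * mu * t)))) ∧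
      -((n : ℝ) * α * Real.exp ((n : ℝ) * mu * t) * r₄ * (y₂ : ℝ) *
          (1 + α * Real.exp ((n : ℝ) * mu * t)) ^ (y₂ - 1) *
          Real.exp (-(lam / mu * α * Real.exp ((n : ℝ) * mu * t)))) ≤ 0 := by
  intro t _
  have hg := hasDerivAt_one_add_mul_pow_mul_exp_neg
    (hasDerivAt_exp_const_mul ((n : ℝ) * mu) t) α (lam / mu) y₂
  refine ⟨hg.differentiableAt, ?_, neg_nonpos.mpr (by positivity)⟩
  rw [hg.deriv]
  field_simp [hmu.ne']
  ring

/-- **Space-time superharmonicity computation for the hitting-time lemma.**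
Let `n ≥ 1`, `λ, μ > 0`, `ρ = λ/μ`, `α ≥ 0`, `r₄ ≥ 0` and `y₂ ∈ ℕ`.  With
`g t = (1 + α e^{nμt})^{y₂} e^{−ρ α e^{nμt}}`, the function `g` is differentiable at every
`t ≥ 0` and satisfies
`g′(t) + n α e^{nμt} e^{−ρα e^{nμt}} [λ (1 + α e^{nμt})^{y₂} − (μ + r₄) y₂ (1 + α e^{nμt})^{y₂−1}]`
`= − n α e^{nμt} r₄ y₂ (1 + α e^{nμt})^{y₂−1} e^{−ρα e^{nμt}} ≤ 0`,
where `y₂ − 1` is truncated subtraction in `ℕ`. -/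
theorem superharmonic_hitting_time_computation
    (n : ℕ) (hn : 1 ≤ n) (lam mu α r₄ : ℝ)
    (hlam : 0 < lam) (hmu : 0 < mu) (hα : 0 ≤ α) (hr₄ : 0 ≤ r₄) (y₂ : ℕ) :
    ∀ t : ℝ, 0 ≤ t →
      DifferentiableAt ℝ
        (fun s : ℝ =>
          (1 + α * Real.exp ((n : ℝ) * mu * s)) ^ y₂ *
            Real.exp (-(lam / mu * α * Real.exp ((n : ℝ) * mu * s)))) t ∧
      deriv
          (fun s : ℝ =>
            (1 + α * Real.exp ((n : ℝ) * mu * s)) ^ y₂ *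
              Real.exp (-(lam / mu * α * Real.exp ((n : ℝ) * mu * s)))) t +
        (n : ℝ) * α * Real.exp ((n : ℝ) * mu * t) *
          Real.exp (-(lam / mu * α * Real.exp ((n : ℝ) * mu * t))) *
          (lam * (1 + α * Real.exp ((n : ℝ) * mu * t)) ^ y₂ -
            (mu + r₄) * (y₂ : ℝ) * (1 + α * Real.exp ((n : ℝ) * mu * t)) ^ (y₂ - 1)) =
        -((n : ℝ) * α * Real.exp ((n : ℝ) * mu * t) * r₄ * (y₂ : ℝ) *
            (1 + α * Real.exp ((n : ℝ) * mu * t)) ^ (y₂ - 1) *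
            Real.exp (-(lam / mu * α * Real.exp ((n : ℝ) * mu * t)))) ∧
      -((n : ℝ) * α * Real.exp ((n : ℝ) * mu * t) * r₄ * (y₂ : ℝ) *
          (1 + α * Real.exp ((n : ℝ) * mu * t)) ^ (y₂ - 1) *
          Real.exp (-(lam / mu * α * Real.exp ((n : ℝ) * mu * t)))) ≤ 0 :=
  superharmonic_hitting_time_computation_general n lam mu α r₄ hmu hα hr₄ y₂
end

section
/- Let β > 0, μ > 0, ρ > 0 and let k ≥ 1 be a fixed real number. For n ∈ ℕ, n ≥ 1, define φ̄ₙ := (∫₀^∞ u^{β/(nμ)−1} e^{−ρu} du) / (∫₀^∞ (1 + u)^{⌈k√n⌉} u^{β/(nμ)−1} e^{−ρu} du). Then φ̄ₙ → 0 as n → ∞. -/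
open MeasureTheory Filter

/-!
With `a = β / (n μ)`, the numerator is the Gamma integral
`(1/ρ)^a Γ(a) = (1/ρ)^a Γ(a + 1) / a`, which grows only like `n μ / β`. On `(1, 2]` the factor
`(1 + u)^⌈k√n⌉` is at least `2^⌈k√n⌉`, so the denominator is at least of order `2^(k√n)`, and
the ratio is `O(n 2^(-k√n)) → 0`.
-/

open Real Set Topology

theorem integrableOn_rpow_mul_exp_neg_mul_Ioi {ρ s : ℝ} (hρ : 0 < ρ) (hs : -1 < s) :
    IntegrableOn (fun u : ℝ => u ^ s * exp (-(ρ * u))) (Ioi 0) := by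
  simpa using integrableOn_rpow_mul_exp_neg_mul_rpow hs zero_lt_one hρ

theorem integrableOn_one_add_pow_mul_rpow_mul_exp_neg_mul_Ioi {ρ s : ℝ} (hρ : 0 < ρ)
    (hs : -1 < s) (N : ℕ) :
    IntegrableOn (fun u : ℝ => (1 + u) ^ N * u ^ s * exp (-(ρ * u))) (Ioi 0) := by
  have hs' : -1 < (N : ℝ) + s := by linarith [N.cast_nonneg (α := ℝ)]
  have hdom := ((integrableOn_rpow_mul_exp_neg_mul_Ioi hρ hs).add
    (integrableOn_rpow_mul_exp_neg_mul_Ioi hρ hs')).const_mul (2 ^ (N - 1))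
  refine hdom.mono' (by fun_prop) ?_
  filter_upwards [ae_restrict_mem measurableSet_Ioi] with u (hu : 0 < u)
  rw [Pi.add_apply, norm_of_nonneg (by positivity), rpow_add hu, rpow_natCast]
  calc (1 + u) ^ N * u ^ s * exp (-(ρ * u))
      ≤ 2 ^ (N - 1) * (1 ^ N + u ^ N) * u ^ s * exp (-(ρ * u)) := by
        gcongr; exact add_pow_le zero_le_one hu.le N
    _ = _ := by ring

theorem le_integral_one_add_pow_mul_rpow_mul_exp_neg_mul_Ioi {ρ s : ℝ} (hρ : 0 < ρ)
    (hs₁ : -1 < s) (hs₀ : s ≤ 0) (N : ℕ) :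
    2 ^ N / 2 * exp (-(2 * ρ)) ≤ ∫ u in Ioi 0, (1 + u) ^ N * u ^ s * exp (-(ρ * u)) := by
  have hint := integrableOn_one_add_pow_mul_rpow_mul_exp_neg_mul_Ioi hρ hs₁ N
  have hsub : Ioc (1 : ℝ) 2 ⊆ Ioi 0 := Ioc_subset_Ioi_self.trans (Ioi_subset_Ioi zero_le_one)
  calc 2 ^ N / 2 * exp (-(2 * ρ))
      = 2 ^ N / 2 * exp (-(2 * ρ)) * volume.real (Ioc (1 : ℝ) 2) := by norm_num
    _ ≤ ∫ u in Ioc 1 2, (1 + u) ^ N * u ^ s * exp (-(ρ * u)) := by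
        refine setIntegral_ge_of_const_le_real measurableSet_Ioc measure_Ioc_lt_top.ne
          (fun u ⟨hu₁, hu₂⟩ => ?_) (hint.mono_set hsub)
        have hu₀ : 0 < u := one_pos.trans hu₁
        have hpow : (2 : ℝ) ^ N ≤ (1 + u) ^ N := pow_le_pow_left₀ zero_le_two (by linarith) N
        have hrpow : 2⁻¹ ≤ u ^ s := calc
          (2 : ℝ)⁻¹ = 2 ^ (-1 : ℝ) := (rpow_neg_one 2).symm
          _ ≤ 2 ^ s := rpow_le_rpow_of_exponent_le one_le_two hs₁.le
          _ ≤ u ^ s := rpow_le_rpow_of_nonpos hu₀ hu₂ hs₀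
        have hexp : exp (-(2 * ρ)) ≤ exp (-(ρ * u)) := exp_le_exp.2 (by nlinarith)
        rw [div_eq_mul_inv]
        gcongr
    _ ≤ ∫ u in Ioi 0, (1 + u) ^ N * u ^ s * exp (-(ρ * u)) := by
        refine setIntegral_mono_set hint ?_ hsub.eventuallyLE
        filter_upwards [ae_restrict_mem measurableSet_Ioi] with u (hu : 0 < u)
        positivity

theorem integral_rpow_mul_exp_neg_mul_Ioi_div_integral_one_add_pow_le {ρ a : ℝ} (hρ : 0 < ρ)
    (ha₀ : 0 < a) (ha₁ : a ≤ 1) (N : ℕ) :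
    (∫ u in Ioi 0, u ^ (a - 1) * exp (-(ρ * u))) /
        (∫ u in Ioi 0, (1 + u) ^ N * u ^ (a - 1) * exp (-(ρ * u))) ≤
      2 * exp (2 * ρ) * ((1 / ρ) ^ a * Gamma (a + 1)) / (a * 2 ^ N) := by
  rw [integral_rpow_mul_exp_neg_mul_Ioi ha₀ hρ]
  calc (1 / ρ) ^ a * Gamma a / (∫ u in Ioi 0, (1 + u) ^ N * u ^ (a - 1) * exp (-(ρ * u)))
      ≤ (1 / ρ) ^ a * Gamma a / (2 ^ N / 2 * exp (-(2 * ρ))) :=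
        div_le_div_of_nonneg_left (by positivity) (by positivity)
          (le_integral_one_add_pow_mul_rpow_mul_exp_neg_mul_Ioi hρ (by linarith) (by linarith) N)
    _ = 2 * exp (2 * ρ) * ((1 / ρ) ^ a * Gamma (a + 1)) / (a * 2 ^ N) := by
        rw [Gamma_add_one ha₀.ne', exp_neg]
        field_simp

theorem tendsto_natCast_div_two_pow_ceil_mul_sqrt {k : ℝ} (hk : 0 < k) :
    Tendsto (fun n : ℕ => (n : ℝ) / 2 ^ ⌈k * √n⌉₊) atTop (𝓝 0) := by
  have hb : 0 < k * log 2 := mul_pos hk (log_pos one_lt_two)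
  have hlim := (tendsto_rpow_mul_exp_neg_mul_atTop_nhds_zero 2 _ hb).comp
    (tendsto_sqrt_atTop.comp tendsto_natCast_atTop_atTop)
  refine squeeze_zero (fun n => by positivity) (fun n => ?_) hlim
  have hpow : exp (k * log 2 * √n) ≤ 2 ^ ⌈k * √n⌉₊ := calc
    exp (k * log 2 * √n) = 2 ^ (k * √n) := by rw [rpow_def_of_pos two_pos]; ring_nf
    _ ≤ 2 ^ (⌈k * √n⌉₊ : ℝ) := rpow_le_rpow_of_exponent_le one_le_two (Nat.le_ceil _)
    _ = 2 ^ ⌈k * √n⌉₊ := rpow_natCast 2 _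
  calc (n : ℝ) / 2 ^ ⌈k * √n⌉₊ ≤ n / exp (k * log 2 * √n) :=
        div_le_div_of_nonneg_left n.cast_nonneg (exp_pos _) hpow
    _ = _ := by simp [neg_mul, exp_neg, div_eq_mul_inv]

theorem tendsto_rpow_mul_Gamma_add_one_nhds_zero {ρ : ℝ} (hρ : 0 < ρ) :
    Tendsto (fun a : ℝ => (1 / ρ) ^ a * Gamma (a + 1)) (𝓝 0) (𝓝 1) := by
  have hGamma : ContinuousAt Gamma 1 :=
    (differentiableAt_Gamma fun m => by linarith [m.cast_nonneg (α := ℝ)]).continuousAt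
  have hcont : ContinuousAt (fun a : ℝ => (1 / ρ) ^ a * Gamma (a + 1)) 0 :=
    (continuousAt_const_rpow (by positivity)).mul
      (hGamma.comp_of_eq (continuous_add_const 1).continuousAt (zero_add 1))
  simpa using hcont.tendsto

/-- **Vanishing of the hitting-time bound along the CLT scaling.**
Let `β > 0`, `μ > 0`, `ρ > 0` and `k ≥ 1` a fixed real number.  For `n ≥ 1`, set
`φ̄ₙ = (∫₀^∞ u^{β/(nμ)−1} e^{−ρu} du) / (∫₀^∞ (1 + u)^{⌈k√n⌉} u^{β/(nμ)−1} e^{−ρu} du)`.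
Then `φ̄ₙ → 0` as `n → ∞`. -/
theorem hitting_time_bound_sqrt_scaling_tendsto_zero
    (β mu ρ k : ℝ) (hβ : 0 < β) (hmu : 0 < mu) (hρ : 0 < ρ) (hk : 1 ≤ k) :
    Tendsto
      (fun n : ℕ =>
        (∫ u in Set.Ioi (0 : ℝ), u ^ (β / ((n : ℝ) * mu) - 1) * Real.exp (-(ρ * u))) /
          (∫ u in Set.Ioi (0 : ℝ),
            (1 + u) ^ (⌈k * Real.sqrt (n : ℝ)⌉₊) * u ^ (β / ((n : ℝ) * mu) - 1) *
              Real.exp (-(ρ * u))))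
      atTop (nhds 0) := by
  set a : ℕ → ℝ := fun n => β / (n * mu)
  have ha : Tendsto a atTop (𝓝 0) := by
    simpa using tendsto_const_nhds.div_atTop
      (tendsto_natCast_atTop_atTop.atTop_mul_const hmu)
  have hlim := ((tendsto_rpow_mul_Gamma_add_one_nhds_zero hρ).comp ha).const_mul
    (2 * exp (2 * ρ) * (mu / β)) |>.mul (tendsto_natCast_div_two_pow_ceil_mul_sqrt (by linarith))
  rw [mul_one, mul_zero] at hlim
  refine squeeze_zero' (Eventually.of_forall fun n => div_nonneg ?_ ?_) ?_ hlim
  · exact setIntegral_nonneg measurableSet_Ioi fun u (hu : 0 < u) => by positivity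
  · exact setIntegral_nonneg measurableSet_Ioi fun u (hu : 0 < u) => by positivity
  filter_upwards [ha.eventually (ge_mem_nhds one_pos), eventually_gt_atTop 0] with n ha₁ hn
  refine (integral_rpow_mul_exp_neg_mul_Ioi_div_integral_one_add_pow_le hρ (by positivity) ha₁
    _).trans_eq ?_
  simp only [a, Function.comp]
  field_simp
end
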